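/- arXiv:1110.5084 — 3 statements merged into one kernel-verified Lean document; each statement's English description precedes it below -/
import Mathlib

section
/- In a pretree, if x₁, x₂, x₃ are three points such that x₁ is adjacent to x₂, x₂ is adjacent to x₃, and x₁ is not adjacent to x₃ (and x₁ ≠ x₃), then x₂ is between x₁ and x₃. -/
/-- A pretree: a set `P` with a ternary betweenness relation `btw x y z`
(read: `y` is between `x` and `z`) satisfying the four pretree axioms. -/
structure Pretree (P : Type*) where
  btw : P → P → P → Prop
  ax1 : ∀ x y : P, ¬ btw x y x
  ax2 : ∀ x y z : P, btw x y z ↔ btw z y x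
  ax3 : ∀ x y z : P, btw x y z → ¬ btw x z y
  ax4 : ∀ x y z w : P, btw x z y → z ≠ w → btw x z w ∨ btw y z w

/-- Two distinct points of a pretree are adjacent if no point lies between them. -/
def Pretree.Adjacent {P : Type*} (T : Pretree P) (x y : P) : Prop :=
  x ≠ y ∧ ∀ z : P, ¬ T.btw x z y

/-- If `x₁` is adjacent to `x₂`, `x₂` is adjacent to `x₃`, and `x₁, x₃` are distinct and
not adjacent, then `x₂` is between `x₁` and `x₃`. -/
theorem pretree_btw_of_adjacent {P : Type*} (T : Pretree P) (x₁ x₂ x₃ : P)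
    (h₁₂ : T.Adjacent x₁ x₂) (h₂₃ : T.Adjacent x₂ x₃)
    (h₁₃ : ¬ T.Adjacent x₁ x₃) (hne : x₁ ≠ x₃) :
    T.btw x₁ x₂ x₃ := by
  have hz : ∃ z : P, T.btw x₁ z x₃ := by
    by_contra h
    push_neg at h
    exact h₁₃ ⟨hne, h⟩
  obtain ⟨z, hz⟩ := hz
  by_cases hzx : z = x₂
  · exact hzx ▸ hz
  · rcases T.ax4 x₁ x₃ z x₂ hz hzx with h | h
    · exact absurd h (h₁₂.2 z)
    · exact absurd ((T.ax2 x₃ z x₂).mp h) (h₂₃.2 z)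
end

section
/- In a pretree, suppose x₁, …, xₙ is a sequence of points such that x_{i} x_{i+1} x_{i+2} holds (x_{i+1} is between xᵢ and x_{i+2}) for all 1 ≤ i ≤ n−2, with all relevant points distinct where needed. Then x₁ x_{i} x_{i+1} holds for all 2 ≤ i ≤ n−1; in particular x₁ x_{n−1} xₙ holds, so x₁ and xₙ are not adjacent (when n ≥ 3). -/
/-- If `x 0, x 1, …, x (n-1)` are distinct points of a pretree with `x (i+1)` between
`x i` and `x (i+2)` for all relevant `i`, then `x i` is between `x 0` and `x (i+1)` for all
`1 ≤ i ≤ n - 2`; in particular `x (n-2)` is between `x 0` and `x (n-1)`, so `x 0` and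
`x (n-1)` are not adjacent. -/
theorem pretree_chain {P : Type*} (T : Pretree P) (n : ℕ) (hn : 3 ≤ n) (x : ℕ → P)
    (hdist : ∀ i j, i < n → j < n → x i = x j → i = j)
    (h : ∀ i, i + 3 ≤ n → T.btw (x i) (x (i + 1)) (x (i + 2))) :
    (∀ i, 1 ≤ i → i + 2 ≤ n → T.btw (x 0) (x i) (x (i + 1))) ∧
      T.btw (x 0) (x (n - 2)) (x (n - 1)) ∧ ¬ T.Adjacent (x 0) (x (n - 1)) := by
  have key : ∀ i, 1 ≤ i → i + 2 ≤ n → T.btw (x 0) (x i) (x (i + 1)) := by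
    intro i
    induction i with
    | zero => omega
    | succ k ih =>
      intro _ hk2
      rcases Nat.eq_or_lt_of_le (Nat.one_le_iff_ne_zero.mpr (by omega) : 1 ≤ k + 1) with h1 | h1
      · have := h 0 hn
        simpa [← h1] using this
      · have hk1 : 1 ≤ k := by omega
        have ihk := ih hk1 (by omega)
        have hchain := h k (by omega)
        have hne : x (k + 1) ≠ x 0 := by
          intro he
          have := hdist (k + 1) 0 (by omega) (by omega) he
          omega
        rcases T.ax4 (x k) (x (k + 2)) (x (k + 1)) (x 0) hchain hne with hc | hc
        · exfalso
          exact T.ax3 (x 0) (x k) (x (k + 1)) ihk ((T.ax2 _ _ _).mp hc)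
        · exact (T.ax2 _ _ _).mp hc
  have hmain : T.btw (x 0) (x (n - 2)) (x (n - 1)) := by
    have := key (n - 2) (by omega) (by omega)
    have e : n - 2 + 1 = n - 1 := by omega
    rwa [e] at this
  exact ⟨key, hmain, fun hadj => hadj.2 (x (n - 2)) hmain⟩
end

section
/- Let P be a countable discrete pretree. Define a graph T whose vertex set is P together with the set of maximal stars of P, with an edge joining v ∈ P to a maximal star H whenever v ∈ H. Then T is connected and contains no cycle, i.e. T is a tree. -/
/-- A star in a pretree: a set of pairwise adjacent points. -/
def Pretree.IsStar {P : Type*} (T : Pretree P) (H : Set P) : Prop :=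
  ∀ x ∈ H, ∀ y ∈ H, x ≠ y → T.Adjacent x y

/-- A maximal star of a pretree. -/
def Pretree.IsMaxStar {P : Type*} (T : Pretree P) (H : Set P) : Prop :=
  T.IsStar H ∧ ∀ H' : Set P, T.IsStar H' → H ⊆ H' → H' = H

/-- A pretree is discrete if between any two points there are only finitely many points. -/
def Pretree.Discrete {P : Type*} (T : Pretree P) : Prop :=
  ∀ x y : P, {z : P | T.btw x z y}.Finite

/-- The graph whose vertices are the points of the pretree together with its maximal stars,
with an edge joining a point `v` to each maximal star containing it. -/
def starGraph {P : Type*} (T : Pretree P) :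
    SimpleGraph (P ⊕ {H : Set P // T.IsMaxStar H}) where
  Adj a b :=
    (∃ v H, a = Sum.inl v ∧ b = Sum.inr H ∧ v ∈ H.1) ∨
      (∃ v H, b = Sum.inl v ∧ a = Sum.inr H ∧ v ∈ H.1)
  symm := ⟨fun a b h => Or.symm h⟩
  loopless := by
    constructor
    rintro a (⟨v, H, h₁, h₂, -⟩ | ⟨v, H, h₁, h₂, -⟩) <;>
      (rw [h₁] at h₂; exact Sum.inl_ne_inr h₂)

/-!
Connectedness: by discreteness, induct on the number of points between `x` and `y`; if there
are none, `x` and `y` are adjacent and so lie in a common maximal star.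

Acyclicity: two distinct maximal stars meet in at most one point, and if `b` lies in two
distinct maximal stars `H ∋ a` and `K ∋ c`, then `b` is between `a` and `c`. Hence along a path
`u₀, H₁, u₁, H₂, …, uₙ` that avoids a star `H ∋ u₀` with another point `x`, each `uᵢ` lies
between `x` and `uₙ`; so the path cannot end at `x`, and every edge is a bridge.
-/

namespace Pretree

variable {P : Type*} {T : Pretree P} {a b c u v w x y z : P}

theorem btw_comm : T.btw a b c ↔ T.btw c b a := T.ax2 a b c

theorem not_btw_right : ¬ T.btw a b b := fun h => T.ax3 a b b h h

theorem ne_of_btw (h : T.btw a b c) : a ≠ c := by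
  rintro rfl
  exact T.ax1 a b h

theorem btw_mono (hz : T.btw x z y) (hw : T.btw x w z) : T.btw x w y := by
  have hwy : w ≠ y := by
    rintro rfl
    exact T.ax3 x z w hz hw
  refine (T.ax4 x z w y hw hwy).resolve_right fun hzwy => ?_
  have hzw : z ≠ w := by
    rintro rfl
    exact not_btw_right hw
  rcases T.ax4 x y z w hz hzw with h | h
  · exact T.ax3 x w z hw h
  · exact T.ax3 y w z (btw_comm.mp hzwy) h

theorem btw_extend_right (h₁ : T.btw x u w) (h₂ : T.btw u w y) : T.btw x u y :=
  (T.ax4 x w u y h₁ (ne_of_btw h₂)).resolve_right fun h =>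
    T.ax3 y w u (btw_comm.mp h₂) (btw_comm.mp h)

theorem Adjacent.symm (h : T.Adjacent a b) : T.Adjacent b a :=
  ⟨h.1.symm, fun z hz => h.2 z (btw_comm.mp hz)⟩

instance : Std.Symm T.Adjacent := ⟨fun _ _ => Adjacent.symm⟩

theorem Adjacent.trans_of_not_btw (hab : T.Adjacent a b) (hbc : T.Adjacent b c) (hac : a ≠ c)
    (hb : ¬ T.btw a b c) : T.Adjacent a c := by
  refine ⟨hac, fun w hw => ?_⟩
  have hwb : w ≠ b := by
    rintro rfl
    exact hb hw
  rcases T.ax4 a c w b hw hwb with h | h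
  · exact hab.2 w h
  · exact hbc.symm.2 w h

theorem isMaxStar_iff_maximal {H : Set P} : T.IsMaxStar H ↔ Maximal T.IsStar H :=
  ⟨fun h => ⟨h.1, fun _ hK hHK => (h.2 _ hK hHK).le⟩,
    fun h => ⟨h.1, fun _ hK hHK => (h.2 hK hHK).antisymm hHK⟩⟩

theorem exists_isMaxStar_superset {S : Set P} (hS : T.IsStar S) :
    ∃ H, T.IsMaxStar H ∧ S ⊆ H := by
  obtain ⟨H, hSH, hH⟩ := zorn_subset_nonempty {H | T.IsStar H}
    (fun c hc hchain _ => ⟨⋃₀ c, (Set.pairwise_sUnion hchain.directedOn).2 hc,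
      fun _ => Set.subset_sUnion_of_mem⟩) S hS
  exact ⟨H, isMaxStar_iff_maximal.2 hH, hSH⟩

theorem IsMaxStar.nonempty [Nonempty P] {H : Set P} (hH : T.IsMaxStar H) : H.Nonempty := by
  rw [Set.nonempty_iff_ne_empty]
  rintro rfl
  obtain ⟨p⟩ := ‹Nonempty P›
  exact Set.singleton_ne_empty p (hH.2 {p} (Set.pairwise_singleton p _) (Set.empty_subset _))

theorem IsMaxStar.eq_of_mem_of_mem {H K : Set P} (hH : T.IsMaxStar H) (hK : T.IsMaxStar K)
    (huH : u ∈ H) (huK : u ∈ K) (hvH : v ∈ H) (hvK : v ∈ K) (huv : u ≠ v) : H = K := by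
  have cross : ∀ a ∈ H, ∀ b ∈ K, a ≠ b → T.Adjacent a b := by
    intro a ha b hb hab
    by_cases haK : a ∈ K
    · exact hK.1 a haK b hb hab
    by_cases hbH : b ∈ H
    · exact hH.1 a ha b hbH hab
    have hau : a ≠ u := by rintro rfl; exact haK huK
    have hav : a ≠ v := by rintro rfl; exact haK hvK
    have hvb : v ≠ b := by rintro rfl; exact hbH hvH
    refine (hH.1 a ha u huH hau).trans_of_not_btw (hK.1 u huK b hb ?_) hab fun hu => ?_
    · rintro rfl; exact hbH huH
    rcases T.ax4 a b u v hu huv with h | h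
    · exact (hH.1 a ha v hvH hav).2 u h
    · exact (hK.1 b hb v hvK hvb.symm).2 u h
  have hstar : T.IsStar (H ∪ K) := Set.pairwise_union_of_symm.2 ⟨hH.1, hK.1, cross⟩
  rw [← hH.2 _ hstar Set.subset_union_left, hK.2 _ hstar Set.subset_union_right]

theorem btw_of_mem_of_mem {H K : Set P} (hH : T.IsMaxStar H) (hK : T.IsMaxStar K) (hHK : H ≠ K)
    (ha : a ∈ H) (hbH : b ∈ H) (hbK : b ∈ K) (hc : c ∈ K) (hab : a ≠ b) (hbc : b ≠ c) :
    T.btw a b c := by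
  by_contra hn
  have hac : a ≠ c := by
    rintro rfl
    exact hHK (hH.eq_of_mem_of_mem hK ha hc hbH hbK hab)
  have hstar : T.IsStar {a, b, c} := by
    refine (Set.pairwise_pair_of_symm.2 fun _ => hK.1 b hbK c hc hbc).insert_of_symm ?_
    rintro x (rfl | rfl) -
    · exact hH.1 a ha x hbH hab
    · exact (hH.1 a ha b hbH hab).trans_of_not_btw (hK.1 b hbK x hc hbc) hac hn
  obtain ⟨M, hM, hsub⟩ := exists_isMaxStar_superset hstar
  have hHM := hH.eq_of_mem_of_mem hM ha (hsub (by simp)) hbH (hsub (by simp)) hab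
  have hKM := hK.eq_of_mem_of_mem hM hbK (hsub (by simp)) hc (hsub (by simp)) hbc
  exact hHK (hHM.trans hKM.symm)

theorem ncard_btw_left_lt (hdisc : T.Discrete) (hz : T.btw x z y) :
    {w | T.btw x w z}.ncard < {w | T.btw x w y}.ncard :=
  Set.ncard_lt_ncard ⟨fun _ => btw_mono hz, fun h => not_btw_right (h hz)⟩ (hdisc x y)

theorem ncard_btw_right_lt (hdisc : T.Discrete) (hz : T.btw x z y) :
    {w | T.btw z w y}.ncard < {w | T.btw x w y}.ncard := by
  simpa only [btw_comm (c := y), btw_comm (a := x)] using ncard_btw_left_lt hdisc (btw_comm.mp hz)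

abbrev MaxStar (T : Pretree P) : Type _ := {H : Set P // T.IsMaxStar H}

end Pretree

namespace starGraph

open Pretree Sum

variable {P : Type*} {T : Pretree P}

@[simp]
theorem adj_inl_inr {v : P} {H : T.MaxStar} : (starGraph T).Adj (inl v) (inr H) ↔ v ∈ H.1 := by
  simp [starGraph]

@[simp]
theorem adj_inr_inl {v : P} {H : T.MaxStar} : (starGraph T).Adj (inr H) (inl v) ↔ v ∈ H.1 := by
  simp [starGraph]

@[simp]
theorem not_adj_inl_inl {v w : P} : ¬ (starGraph T).Adj (inl v) (inl w) := by
  simp [starGraph]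

@[simp]
theorem not_adj_inr_inr {H K : T.MaxStar} : ¬ (starGraph T).Adj (inr H) (inr K) := by
  simp [starGraph]

theorem reachable_of_adjacent {x y : P} (h : T.Adjacent x y) :
    (starGraph T).Reachable (inl x) (inl y) := by
  obtain ⟨H, hH, hxy⟩ := exists_isMaxStar_superset (Set.pairwise_pair_of_symm.2 fun _ => h)
  have hx : (starGraph T).Adj (inl x) (inr ⟨H, hH⟩) := adj_inl_inr.2 (hxy (by simp))
  have hy : (starGraph T).Adj (inr ⟨H, hH⟩) (inl y) := adj_inr_inl.2 (hxy (by simp))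
  exact hx.reachable.trans hy.reachable

theorem reachable_inl_inl (hdisc : T.Discrete) (x y : P) :
    (starGraph T).Reachable (inl x) (inl y) := by
  induction hn : {z | T.btw x z y}.ncard using Nat.strong_induction_on generalizing x y with
  | _ n ih =>
  by_cases hxy : ∃ z, T.btw x z y
  · obtain ⟨z, hz⟩ := hxy
    exact (ih _ (hn ▸ ncard_btw_left_lt hdisc hz) x z rfl).trans
      (ih _ (hn ▸ ncard_btw_right_lt hdisc hz) z y rfl)
  · obtain rfl | hne := eq_or_ne x y
    · rfl
    · exact reachable_of_adjacent ⟨hne, not_exists.mp hxy⟩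

theorem connected (hdisc : T.Discrete) : (starGraph T).Connected := by
  obtain ⟨H₀, hH₀, -⟩ := exists_isMaxStar_superset (T := T) (Set.pairwise_empty _)
  have reach_inr (x : P) (H : T.MaxStar) : (starGraph T).Reachable (inl x) (inr H) := by
    have : Nonempty P := ⟨x⟩
    obtain ⟨v, hv⟩ := H.2.nonempty
    exact (reachable_inl_inl hdisc x v).trans (adj_inl_inr.2 hv).reachable
  refine (SimpleGraph.connected_iff _).2 ⟨fun a b => ?_, ⟨inr ⟨H₀, hH₀⟩⟩⟩
  rcases a with x | H <;> rcases b with y | K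
  · exact reachable_inl_inl hdisc x y
  · exact reach_inr x K
  · exact (reach_inr y H).symm
  · rcases isEmpty_or_nonempty P with _ | _
    · rw [Subsingleton.elim H K]
    · obtain ⟨v, -⟩ := H.2.nonempty
      exact (reach_inr v H).symm.trans (reach_inr v K)

theorem btw_of_isPath {u y : P} (p : (starGraph T).Walk (inl u) (inl y)) (hp : p.IsPath)
    (huy : u ≠ y) {H : T.MaxStar} (hH : inr H ∉ p.support) (hu : u ∈ H.1) {x : P}
    (hx : x ∈ H.1) (hxu : x ≠ u) : T.btw x u y := by
  induction hn : p.length using Nat.strong_induction_on generalizing u p H x with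
  | _ n ih =>
  cases p with
  | nil => exact absurd rfl huy
  | @cons _ v _ h q =>
  rcases v with _ | K
  · exact absurd h not_adj_inl_inl
  cases q with
  | @cons _ v _ h' r =>
  rcases v with u' | _
  swap
  · exact absurd h' not_adj_inr_inr
  simp only [SimpleGraph.Walk.cons_isPath_iff, SimpleGraph.Walk.support_cons, List.mem_cons,
    not_or] at hp hH
  have hHK : H.1 ≠ K.1 := fun e => hH.2.1 (congrArg inr (Subtype.ext e))
  have huu' : u ≠ u' := by
    rintro rfl
    exact hp.2.2 r.start_mem_support
  have hstep := btw_of_mem_of_mem H.2 K.2 hHK hx hu (adj_inl_inr.1 h) (adj_inr_inl.1 h') hxu huu'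
  obtain rfl | hu'y := eq_or_ne u' y
  · exact hstep
  · exact btw_extend_right hstep
      (ih r.length (by simp [← hn]) r hp.1.1 hu'y hp.1.2 (adj_inr_inl.1 h') (adj_inl_inr.1 h)
        huu' rfl)

theorem mem_edges_of_isPath {x : P} {H : T.MaxStar} (hx : x ∈ H.1)
    (p : (starGraph T).Walk (inr H) (inl x)) (hp : p.IsPath) : s(inr H, inl x) ∈ p.edges := by
  cases p with
  | @cons _ v _ h r =>
  rcases v with u | _
  swap
  · exact absurd h not_adj_inr_inr
  obtain rfl | hxu := eq_or_ne x u
  · simp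
  simp only [SimpleGraph.Walk.cons_isPath_iff] at hp
  exact absurd (btw_of_isPath r hp.1 hxu.symm hp.2 (adj_inr_inl.1 h) hx hxu) (T.ax1 x u)

theorem isAcyclic : (starGraph T).IsAcyclic := by
  classical
  have key (x : P) (H : T.MaxStar) (hx : x ∈ H.1) : (starGraph T).IsBridge s(inr H, inl x) :=
    SimpleGraph.isBridge_iff_forall_walk_mem_edges.2 fun p =>
      p.edges_bypass_subset_edges (mem_edges_of_isPath hx _ p.bypass_isPath)
  rw [SimpleGraph.isAcyclic_iff_forall_adj_isBridge]
  rintro (x | H) (y | K) hadj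
  · exact absurd hadj not_adj_inl_inl
  · rw [Sym2.eq_swap]
    exact key x K (adj_inl_inr.1 hadj)
  · exact key y H (adj_inr_inl.1 hadj)
  · exact absurd hadj not_adj_inr_inr

end starGraph

theorem starGraph_isTree_general {P : Type*} (T : Pretree P)
    (hdisc : T.Discrete) : (starGraph T).IsTree :=
  ⟨starGraph.connected hdisc, starGraph.isAcyclic⟩

/-- For a countable discrete pretree, the graph on the points and maximal stars is a tree. -/
theorem starGraph_isTree {P : Type*} [Countable P] [Nonempty P] (T : Pretree P)
    (hdisc : T.Discrete) : (starGraph T).IsTree :=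
  starGraph_isTree_general T hdisc
end
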